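/- arXiv:0902.1048 — 7 statements merged into one kernel-verified Lean document; each statement's English description precedes it below -/
import Mathlib

section
/- Fix a deterministic complete transition structure T with state set {1,...,n}, an integer ℓ with 1 ≤ ℓ < n, and states p ≠ q, p' ≠ q'. Let F_ℓ(p,q,p',q') be the set of subsets F ⊆ {1,...,n} such that in the automaton (T,F): p ∼_{ℓ−1} q, exactly one of p', q' lies in F, and there exists a word u of length ℓ with p·u = p' and q·u = q'. Then |F_ℓ(p,q,p',q')| ≤ 2^{n−ℓ}. -/
def run {Q A : Type*} (δ : Q → A → Q) (p : Q) (u : List A) : Q := u.foldl δ p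

def iEquiv {Q A : Type*} (δ : Q → A → Q) (F : Set Q) (i : ℕ) (p q : Q) : Prop :=
  ∀ u : List A, u.length ≤ i → (run δ p u ∈ F ↔ run δ q u ∈ F)

/-- Counting lemma: if edges `e 0, …, e (m-1)` are "independent" (each new edge connects
two vertices not yet connected by earlier edges), then the number of subsets `F` respecting
all edge constraints is at most `2 ^ (n - m)`. -/
lemma key_count (n : ℕ) (e : ℕ → Fin n × Fin n) :
    ∀ m, m ≤ n →
    (∀ j < m, ¬ Relation.EqvGen
        (fun a b => ∃ i < j, a = (e i).1 ∧ b = (e i).2) (e j).1 (e j).2) →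
    {F : Set (Fin n) | ∀ i < m, ((e i).1 ∈ F ↔ (e i).2 ∈ F)}.ncard ≤ 2 ^ (n - m) := by
  intro m
  induction m with
  | zero =>
    intro _ _
    have huniv : {F : Set (Fin n) | ∀ i < 0, ((e i).1 ∈ F ↔ (e i).2 ∈ F)} = Set.univ := by
      ext F; simp
    rw [huniv, Set.ncard_univ, Nat.card_eq_fintype_card, Fintype.card_set, Fintype.card_fin]
    simp
  | succ m ih =>
    intro hmn hind
    set r : Fin n → Fin n → Prop := fun a b => ∃ i < m, a = (e i).1 ∧ b = (e i).2 with hr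
    set C : Set (Fin n) := {v | Relation.EqvGen r (e m).1 v} with hC
    set Sm : Set (Set (Fin n)) :=
      {F : Set (Fin n) | ∀ i < m, ((e i).1 ∈ F ↔ (e i).2 ∈ F)} with hSm
    set S : Set (Set (Fin n)) :=
      {F : Set (Fin n) | ∀ i < m + 1, ((e i).1 ∈ F ↔ (e i).2 ∈ F)} with hS
    -- endpoints of earlier edges are both in C or both outside C
    have hCC : ∀ i < m, ((e i).1 ∈ C ↔ (e i).2 ∈ C) := by
      intro i hi
      have hgen : Relation.EqvGen r (e i).1 (e i).2 :=
        Relation.EqvGen.rel _ _ ⟨i, hi, rfl, rfl⟩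
      constructor
      · intro h; exact Relation.EqvGen.trans _ _ _ h hgen
      · intro h; exact Relation.EqvGen.trans _ _ _ h (Relation.EqvGen.symm _ _ hgen)
    have haC : (e m).1 ∈ C := Relation.EqvGen.refl _
    have hbC : (e m).2 ∉ C := hind m (Nat.lt_succ_self m)
    -- the flip map
    have hTmem : ∀ F ∈ S, symmDiff F C ∈ Sm := by
      intro F hF i hi
      have h1 := hF i (Nat.lt_succ_of_lt hi)
      have h2 := hCC i hi
      simp only [Set.mem_symmDiff]
      tauto
    have hsub : S ⊆ Sm := fun F hF i hi => hF i (Nat.lt_succ_of_lt hi)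
    have hdisj : Disjoint S ((fun F => symmDiff F C) '' S) := by
      rw [Set.disjoint_left]
      rintro G hG ⟨F, hF, rfl⟩
      have h1 := hF m (Nat.lt_succ_self m)
      have h2 := hG m (Nat.lt_succ_self m)
      simp only [Set.mem_symmDiff] at h2
      tauto
    have himg : ((fun F => symmDiff F C) '' S) ⊆ Sm := by
      rintro _ ⟨F, hF, rfl⟩; exact hTmem F hF
    have hunion : S ∪ ((fun F => symmDiff F C) '' S) ⊆ Sm := Set.union_subset hsub himg
    have hinj : Function.Injective (fun F : Set (Fin n) => symmDiff F C) := by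
      intro F G h
      have := congrArg (fun X => symmDiff X C) h
      simpa [symmDiff_symmDiff_cancel_right] using this
    have hcard : S.ncard + S.ncard ≤ Sm.ncard := by
      calc S.ncard + S.ncard
          = S.ncard + ((fun F => symmDiff F C) '' S).ncard := by
            rw [Set.ncard_image_of_injective _ hinj]
        _ = (S ∪ ((fun F => symmDiff F C) '' S)).ncard :=
            (Set.ncard_union_eq hdisj (Set.toFinite _) (Set.toFinite _)).symm
        _ ≤ Sm.ncard := Set.ncard_le_ncard hunion (Set.toFinite _)
    have hSm_le : Sm.ncard ≤ 2 ^ (n - m) := by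
      apply ih (le_of_lt hmn)
      intro j hj
      exact hind j (Nat.lt_succ_of_lt hj)
    have hexp : 2 ^ (n - m) = 2 * 2 ^ (n - (m + 1)) := by
      have : n - m = (n - (m + 1)) + 1 := by omega
      rw [this, pow_succ]; ring
    omega

lemma run_append {Q A : Type*} (δ : Q → A → Q) (s : Q) (v w : List A) :
    run δ s (v ++ w) = run δ (run δ s v) w := by
  simp [run, List.foldl_append]

theorem stmt5 {A : Type*} [Fintype A] (n ℓ : ℕ) (hl : 1 ≤ ℓ) (hln : ℓ < n)
    (δ : Fin n → A → Fin n) (p q p' q' : Fin n) (hpq : p ≠ q) (hp'q' : p' ≠ q') :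
    {F : Set (Fin n) | iEquiv δ F (ℓ - 1) p q ∧ Xor' (p' ∈ F) (q' ∈ F) ∧
      ∃ u : List A, u.length = ℓ ∧ run δ p u = p' ∧ run δ q u = q'}.ncard
      ≤ 2 ^ (n - ℓ) := by
  set S := {F : Set (Fin n) | iEquiv δ F (ℓ - 1) p q ∧ Xor' (p' ∈ F) (q' ∈ F) ∧
      ∃ u : List A, u.length = ℓ ∧ run δ p u = p' ∧ run δ q u = q'} with hSdef
  rcases Set.eq_empty_or_nonempty S with h | ⟨F₀, hF₀⟩
  · simp [h]
  obtain ⟨hE₀, hX₀, u, hu, hup, huq⟩ := hF₀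
  set e : ℕ → Fin n × Fin n :=
    fun i => (run δ p (u.take i), run δ q (u.take i)) with he
  have htake : ∀ i, i ≤ ℓ → (u.take i).length = i := by
    intro i hi; simp [hu]; omega
  have hdropp : ∀ j, run δ (run δ p (u.take j)) (u.drop j) = p' := by
    intro j; rw [← run_append, List.take_append_drop, hup]
  have hdropq : ∀ j, run δ (run δ q (u.take j)) (u.drop j) = q' := by
    intro j; rw [← run_append, List.take_append_drop, huq]
  -- independence of the edges
  have hind : ∀ j < ℓ, ¬ Relation.EqvGen
      (fun a b => ∃ i < j, a = (e i).1 ∧ b = (e i).2) (e j).1 (e j).2 := by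
    intro j hj hEq
    have hequiv : Equivalence (fun a b : Fin n => iEquiv δ F₀ (ℓ - j) a b) := by
      constructor
      · intro a w hw; rfl
      · intro a b hab w hw; exact (hab w hw).symm
      · intro a b c hab hbc w hw; exact (hab w hw).trans (hbc w hw)
    have hkey : iEquiv δ F₀ (ℓ - j) (e j).1 (e j).2 := by
      rw [← hequiv.eqvGen_iff]
      refine hEq.mono ?_
      rintro a b ⟨i, hij, rfl, rfl⟩
      -- generator: iEquiv δ F₀ (ℓ - j) (run δ p (u.take i)) (run δ q (u.take i))
      intro w hw
      have hlen : (u.take i ++ w).length ≤ ℓ - 1 := by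
        rw [List.length_append, htake i (by omega)]
        omega
      have := hE₀ (u.take i ++ w) hlen
      rwa [run_append, run_append] at this
    have hcon := hkey (u.drop j) (by simp [hu])
    rw [hdropp j, hdropq j] at hcon
    exact (xor_iff_not_iff _ _).mp hX₀ hcon
  have hsub : S ⊆ {F : Set (Fin n) | ∀ i < ℓ, ((e i).1 ∈ F ↔ (e i).2 ∈ F)} := by
    rintro F ⟨hEF, -, -⟩ i hi
    exact hEF (u.take i) (by rw [htake i (by omega)]; omega)
  calc S.ncard ≤ {F : Set (Fin n) | ∀ i < ℓ, ((e i).1 ∈ F ↔ (e i).2 ∈ F)}.ncard :=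
        Set.ncard_le_ncard hsub (Set.toFinite _)
    _ ≤ 2 ^ (n - ℓ) := key_count n e ℓ (le_of_lt hln) hind
end

section
/- Fix a deterministic complete transition structure T with state set {1,...,n} and an integer ℓ with 1 ≤ ℓ < n. Let F^{≥ℓ} be the set of subsets F ⊆ {1,...,n} such that in the automaton (T,F) there exist states p ≠ q with p ∼_{ℓ−1} q but p ≁_ℓ q. Then |F^{≥ℓ}| ≤ n^4 · 2^{n−ℓ}. -/
namespace Stmt9Aux

open Relation

variable {A : Type*} {n : ℕ} (δ : Fin n → A → Fin n) (p q : Fin n)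

/-- Edge relation at level `i`: pairs `(p·u, q·u)` for words `u` of length at most `i`. -/
def ew (i : ℕ) (x y : Fin n) : Prop :=
  ∃ u : List A, u.length ≤ i ∧ x = run δ p u ∧ y = run δ q u

theorem run_append_singleton (x : Fin n) (u : List A) (a : A) :
    run δ x (u ++ [a]) = δ (run δ x u) a := by
  simp [run, List.foldl_append]

theorem ew_mono {i j : ℕ} (hij : i ≤ j) {x y} (h : ew δ p q i x y) : ew δ p q j x y := by
  obtain ⟨u, hu, hx, hy⟩ := h
  exact ⟨u, hu.trans hij, hx, hy⟩

theorem step {i : ℕ} (h : ∀ x y, ew δ p q (i + 1) x y → EqvGen (ew δ p q i) x y)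
    (a : A) {x y} (hxy : EqvGen (ew δ p q i) x y) :
    EqvGen (ew δ p q i) (δ x a) (δ y a) := by
  induction hxy with
  | rel x y hxy =>
      obtain ⟨u, hu, rfl, rfl⟩ := hxy
      refine h _ _ ⟨u ++ [a], ?_, ?_, ?_⟩
      · simpa using Nat.succ_le_succ hu
      · rw [run_append_singleton]
      · rw [run_append_singleton]
  | refl x => exact EqvGen.refl _
  | symm x y _ ih => exact EqvGen.symm _ _ ih
  | trans x y z _ _ ih1 ih2 => exact EqvGen.trans _ _ _ ih1 ih2

theorem allv {i : ℕ} (h : ∀ x y, ew δ p q (i + 1) x y → EqvGen (ew δ p q i) x y)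
    (u : List A) : EqvGen (ew δ p q i) (run δ p u) (run δ q u) := by
  induction u using List.reverseRecOn with
  | nil => exact EqvGen.rel _ _ ⟨[], by simp, rfl, rfl⟩
  | append_singleton w a ih =>
      rw [run_append_singleton, run_append_singleton]
      exact step δ p q h a ih

theorem resp {F : Set (Fin n)} {i : ℕ} (hF : iEquiv δ F i p q) :
    ∀ x y, EqvGen (ew δ p q i) x y → (x ∈ F ↔ y ∈ F) := by
  intro x y h
  induction h with
  | rel x y hxy => obtain ⟨u, hu, rfl, rfl⟩ := hxy; exact hF u hu
  | refl x => exact Iff.rfl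
  | symm x y _ ih => exact ih.symm
  | trans x y z _ _ ih1 ih2 => exact ih1.trans ih2

/-- Sets saturated w.r.t. a setoid on `Fin n` number at most `2 ^ #classes`. -/
theorem count_sat (s : Setoid (Fin n)) :
    {F : Set (Fin n) | ∀ x y : Fin n, s.r x y → (x ∈ F ↔ y ∈ F)}.ncard
      ≤ 2 ^ Nat.card (Quotient s) := by
  classical
  have key : ∀ H : Set (Fin n), (∀ x y : Fin n, s.r x y → (x ∈ H ↔ y ∈ H)) →
      Quotient.mk s ⁻¹' (Quotient.mk s '' H) = H := by
    intro H hH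
    ext x
    simp only [Set.mem_preimage, Set.mem_image]
    constructor
    · rintro ⟨y, hy, hyx⟩
      exact (hH y x (Quotient.exact hyx)).mp hy
    · intro hx; exact ⟨x, hx, rfl⟩
  have h1 : {F : Set (Fin n) | ∀ x y : Fin n, s.r x y → (x ∈ F ↔ y ∈ F)}.ncard
      ≤ (Set.univ : Set (Set (Quotient s))).ncard := by
    refine Set.ncard_le_ncard_of_injOn (fun F => Quotient.mk s '' F)
      (fun F _ => trivial) ?_ Set.finite_univ
    intro F hF G hG hFG
    calc F = Quotient.mk s ⁻¹' (Quotient.mk s '' F) := (key F hF).symm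
      _ = Quotient.mk s ⁻¹' (Quotient.mk s '' G) := by
            exact congrArg (fun t => Quotient.mk s ⁻¹' t) hFG
      _ = G := key G hG
  letI : Fintype (Quotient s) := Fintype.ofFinite _
  have h2 : (Set.univ : Set (Set (Quotient s))).ncard = 2 ^ Nat.card (Quotient s) := by
    rw [Set.ncard_univ, Nat.card_eq_fintype_card, Nat.card_eq_fintype_card, Fintype.card_set]
  rw [h2] at h1
  exact h1

theorem card_quot_zero_lt (hpq : p ≠ q) :
    Nat.card (Quotient (EqvGen.setoid (ew δ p q 0))) < n := by
  classical
  letI : Fintype (Quotient (EqvGen.setoid (ew δ p q 0))) := Fintype.ofFinite _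
  rw [Nat.card_eq_fintype_card]
  have := Fintype.card_lt_of_surjective_not_injective
    (Quotient.mk (EqvGen.setoid (ew δ p q 0)))
    (Quotient.mk_surjective) ?_
  · simpa using this
  · intro hinj
    apply hpq
    apply hinj
    exact Quotient.sound (EqvGen.rel _ _ ⟨[], by simp, rfl, rfl⟩)

theorem card_quot_decrease {i : ℕ}
    (h : ∃ x y, ew δ p q (i + 1) x y ∧ ¬ EqvGen (ew δ p q i) x y) :
    Nat.card (Quotient (EqvGen.setoid (ew δ p q (i + 1))))
      < Nat.card (Quotient (EqvGen.setoid (ew δ p q i))) := by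
  classical
  obtain ⟨x, y, hxy, hnot⟩ := h
  letI : Fintype (Quotient (EqvGen.setoid (ew δ p q i))) := Fintype.ofFinite _
  letI : Fintype (Quotient (EqvGen.setoid (ew δ p q (i + 1)))) := Fintype.ofFinite _
  rw [Nat.card_eq_fintype_card, Nat.card_eq_fintype_card]
  have hmono : ∀ a b : Fin n, EqvGen (ew δ p q i) a b → EqvGen (ew δ p q (i + 1)) a b :=
    fun a b hab => Relation.EqvGen.mono (r := ew δ p q i) (p := ew δ p q (i + 1)) (fun a b h => ew_mono δ p q (Nat.le_succ i) h) a b hab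
  set f : Quotient (EqvGen.setoid (ew δ p q i)) → Quotient (EqvGen.setoid (ew δ p q (i + 1))) :=
    fun z => Quotient.liftOn z (fun a => Quotient.mk (EqvGen.setoid (ew δ p q (i + 1))) a)
      (fun a b hab => Quotient.sound (hmono a b hab)) with hf
  apply Fintype.card_lt_of_surjective_not_injective f
  · intro z
    obtain ⟨a, rfl⟩ := Quotient.exists_rep z
    exact ⟨Quotient.mk _ a, rfl⟩
  · intro hinj
    apply hnot
    have hfx : f (Quotient.mk _ x) = f (Quotient.mk _ y) :=
      Quotient.sound (EqvGen.rel _ _ hxy)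
    exact Quotient.exact (hinj hfx)

theorem chain (hpq : p ≠ q) (m : ℕ)
    (hB : ∀ i < m, ∃ x y, ew δ p q (i + 1) x y ∧ ¬ EqvGen (ew δ p q i) x y) :
    Nat.card (Quotient (EqvGen.setoid (ew δ p q m))) + m < n := by
  induction m with
  | zero => simpa using card_quot_zero_lt δ p q hpq
  | succ k ih =>
      have h1 := ih (fun i hi => hB i (hi.trans (Nat.lt_succ_self k)))
      have h2 := card_quot_decrease δ p q (hB k (Nat.lt_succ_self k))
      omega

theorem pair_bound (m : ℕ) (hmn : m + 1 < n) (hpq : p ≠ q) :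
    {F : Set (Fin n) | iEquiv δ F m p q ∧ ¬ iEquiv δ F (m + 1) p q}.ncard
      ≤ 2 ^ (n - (m + 1)) := by
  classical
  by_cases hA : ∃ i < m, ∀ x y, ew δ p q (i + 1) x y → EqvGen (ew δ p q i) x y
  · obtain ⟨i, him, hstab⟩ := hA
    have hempty : {F : Set (Fin n) | iEquiv δ F m p q ∧ ¬ iEquiv δ F (m + 1) p q} = ∅ := by
      ext F
      simp only [Set.mem_setOf_eq, Set.mem_empty_iff_false, iff_false, not_and, not_not]
      intro h1
      have hFi : iEquiv δ F i p q := fun u hu => h1 u (hu.trans him.le)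
      intro u _
      exact resp δ p q hFi _ _ (allv δ p q hstab u)
    rw [hempty]
    simp
  · push_neg at hA
    have hchain := chain δ p q hpq m hA
    have hsub : {F : Set (Fin n) | iEquiv δ F m p q ∧ ¬ iEquiv δ F (m + 1) p q}
        ⊆ {F : Set (Fin n) | ∀ x y : Fin n,
            (EqvGen.setoid (ew δ p q m)).r x y → (x ∈ F ↔ y ∈ F)} := by
      intro F hF
      exact fun x y hxy => resp δ p q hF.1 x y hxy
    calc {F : Set (Fin n) | iEquiv δ F m p q ∧ ¬ iEquiv δ F (m + 1) p q}.ncard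
        ≤ {F : Set (Fin n) | ∀ x y : Fin n,
            (EqvGen.setoid (ew δ p q m)).r x y → (x ∈ F ↔ y ∈ F)}.ncard :=
          Set.ncard_le_ncard hsub (Set.toFinite _)
      _ ≤ 2 ^ Nat.card (Quotient (EqvGen.setoid (ew δ p q m))) := count_sat _
      _ ≤ 2 ^ (n - (m + 1)) := Nat.pow_le_pow_right (by norm_num) (by omega)

theorem ncard_iUnion_le_sum {ι α : Type*} [Fintype ι] [Finite α] (s : ι → Set α) :
    (⋃ i, s i).ncard ≤ ∑ i : ι, (s i).ncard := by
  classical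
  have h1 : (⋃ i, s i).ncard = (Set.toFinite (⋃ i, s i)).toFinset.card :=
    Set.ncard_eq_toFinset_card _ _
  rw [h1]
  have h2 : (Set.toFinite (⋃ i, s i)).toFinset
      ⊆ Finset.univ.biUnion (fun i => (Set.toFinite (s i)).toFinset) := by
    intro x hx
    simp only [Set.Finite.mem_toFinset, Set.mem_iUnion] at hx
    obtain ⟨i, hi⟩ := hx
    simp only [Finset.mem_biUnion]
    exact ⟨i, Finset.mem_univ i, (Set.Finite.mem_toFinset _).mpr hi⟩
  calc (Set.toFinite (⋃ i, s i)).toFinset.card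
      ≤ (Finset.univ.biUnion (fun i => (Set.toFinite (s i)).toFinset)).card :=
        Finset.card_le_card h2
    _ ≤ ∑ i : ι, (Set.toFinite (s i)).toFinset.card := Finset.card_biUnion_le
    _ = ∑ i : ι, (s i).ncard := by
        refine Finset.sum_congr rfl fun i _ => ?_
        rw [Set.ncard_eq_toFinset_card]

end Stmt9Aux

theorem stmt9 {A : Type*} [Fintype A] (n ℓ : ℕ) (hl : 1 ≤ ℓ) (hln : ℓ < n)
    (δ : Fin n → A → Fin n) :
    {F : Set (Fin n) | ∃ p q : Fin n, p ≠ q ∧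
      iEquiv δ F (ℓ - 1) p q ∧ ¬ iEquiv δ F ℓ p q}.ncard
      ≤ n ^ 4 * 2 ^ (n - ℓ) := by
  classical
  obtain ⟨m, rfl⟩ : ∃ m, ℓ = m + 1 := ⟨ℓ - 1, (Nat.succ_pred_eq_of_pos hl).symm⟩
  have hm : m + 1 - 1 = m := rfl
  set T : Fin n × Fin n → Set (Set (Fin n)) := fun pq =>
    {F : Set (Fin n) | pq.1 ≠ pq.2 ∧ iEquiv δ F m pq.1 pq.2 ∧ ¬ iEquiv δ F (m + 1) pq.1 pq.2}
    with hT
  have hsub : {F : Set (Fin n) | ∃ p q : Fin n, p ≠ q ∧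
      iEquiv δ F (m + 1 - 1) p q ∧ ¬ iEquiv δ F (m + 1) p q} ⊆ ⋃ pq, T pq := by
    intro F hF
    obtain ⟨p, q, hpq, h1, h2⟩ := hF
    exact Set.mem_iUnion.mpr ⟨(p, q), hpq, by simpa [hm] using h1, h2⟩
  have hTb : ∀ pq : Fin n × Fin n, (T pq).ncard ≤ 2 ^ (n - (m + 1)) := by
    intro ⟨p, q⟩
    by_cases hpq : p = q
    · have : T (p, q) = ∅ := by
        ext F; simp [hT, hpq]
      simp [this]
    · have hsub2 : T (p, q) ⊆
          {F : Set (Fin n) | iEquiv δ F m p q ∧ ¬ iEquiv δ F (m + 1) p q} :=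
        fun F hF => ⟨hF.2.1, hF.2.2⟩
      exact (Set.ncard_le_ncard hsub2 (Set.toFinite _)).trans
        (Stmt9Aux.pair_bound δ p q m hln hpq)
  calc {F : Set (Fin n) | ∃ p q : Fin n, p ≠ q ∧
      iEquiv δ F (m + 1 - 1) p q ∧ ¬ iEquiv δ F (m + 1) p q}.ncard
      ≤ (⋃ pq, T pq).ncard := Set.ncard_le_ncard hsub (Set.toFinite _)
    _ ≤ ∑ pq : Fin n × Fin n, (T pq).ncard := Stmt9Aux.ncard_iUnion_le_sum T
    _ ≤ ∑ _pq : Fin n × Fin n, 2 ^ (n - (m + 1)) :=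
        Finset.sum_le_sum (fun pq _ => hTb pq)
    _ = n ^ 2 * 2 ^ (n - (m + 1)) := by
        simp [Finset.sum_const, Fintype.card_prod]
        ring
    _ ≤ n ^ 4 * 2 ^ (n - (m + 1)) := by
        have h24 : n ^ 2 ≤ n ^ 4 := Nat.pow_le_pow_right (by omega) (by norm_num)
        exact Nat.mul_le_mul_right _ h24
end

section
/- For the uniform distribution on binary words of length n (n ≥ 1), the probability that the longest run of 1's is strictly smaller than ⌊(1/2)·log₂ n⌋ is at most e^{−√n/2} + O(log n / √n); in particular the number of binary words of length n whose longest run of 1's is smaller than ⌊(1/2)·log₂ n⌋ is o(2^n) as n → ∞. -/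
open Real Filter
/-- The length of the longest run of `true` (of `1`'s) in a binary word. -/
noncomputable def longestRun (w : List Bool) : ℕ :=
  sSup {k : ℕ | List.replicate k true <:+: w}
lemma le_longestRun {w : List Bool} {k : ℕ} (h : List.replicate k true <:+: w) :
    k ≤ longestRun w :=
  le_csSup ⟨w.length, fun j hj => by simpa using hj.length_le⟩ h
lemma block_infix {n k : ℕ} (u : Fin n → Bool) (a : ℕ) (ha : a + k ≤ n)
    (h : ∀ j (hj : j < k), u ⟨a + j, by omega⟩ = true) :
    List.replicate k true <:+: List.ofFn u := by
  have heq : ((List.ofFn u).drop a).take k = List.replicate k true := by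
    apply List.ext_getElem
    · simp; omega
    · intro i h1 h2
      simp only [List.getElem_take, List.getElem_drop, List.getElem_ofFn,
        List.getElem_replicate]
      exact h i (by simpa using h2)
  exact heq ▸ ((List.take_prefix _ _).isInfix.trans (List.drop_suffix _ _).isInfix)

lemma count_bound (n k : ℕ) (hk : 0 < k) :
    Nat.card {u : Fin n → Bool | longestRun (List.ofFn u) < k}
      ≤ (2 ^ k - 1) ^ (n / k) * 2 ^ (n - n / k * k) := by
  set m := n / k with hmdef
  have hmk : m * k ≤ n := Nat.div_mul_le_self n k
  have hpos1 : ∀ (i : Fin m) (j : Fin k), (i : ℕ) * k + (j : ℕ) < n := by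
    intro i j
    have h1 : (i : ℕ) * k + k ≤ m * k := by
      have := Nat.mul_le_mul_right k i.isLt
      rwa [Nat.succ_mul] at this
    have := j.isLt
    omega
  have hpos2 : ∀ r : Fin (n - m * k), m * k + (r : ℕ) < n := by
    intro r; have := r.isLt; omega
  let f : {u : Fin n → Bool // longestRun (List.ofFn u) < k} →
      (Fin m → {g : Fin k → Bool // ¬ g = fun _ => true}) × (Fin (n - m * k) → Bool) :=
    fun u => (fun i => ⟨fun j => u.1 ⟨(i : ℕ) * k + j, hpos1 i j⟩, by
      intro hcontra
      have hik : (i : ℕ) * k + k ≤ n := by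
        have h1 := Nat.mul_le_mul_right k i.isLt
        rw [Nat.succ_mul] at h1
        omega
      have hinf := block_infix u.1 ((i : ℕ) * k) hik (fun j hj => by
        have := congrFun hcontra ⟨j, hj⟩
        simpa using this)
      exact absurd (le_longestRun hinf) (not_le.mpr u.2)⟩,
      fun r => u.1 ⟨m * k + r, hpos2 r⟩)
  have finj : Function.Injective f := by
    intro u v h
    have h1 := congrArg Prod.fst h
    have h2 := congrArg Prod.snd h
    apply Subtype.ext
    funext x
    by_cases hx : (x : ℕ) < m * k
    · have hi : (x : ℕ) / k < m := (Nat.div_lt_iff_lt_mul hk).mpr hx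
      have hj : (x : ℕ) % k < k := Nat.mod_lt _ hk
      have hval : (x : ℕ) / k * k + (x : ℕ) % k = (x : ℕ) := Nat.div_add_mod' _ _
      have := congrFun (congrArg Subtype.val (congrFun h1 ⟨(x : ℕ) / k, hi⟩)) ⟨(x : ℕ) % k, hj⟩
      simp only [f] at this
      have hxeq : x = ⟨(x : ℕ) / k * k + (x : ℕ) % k, hpos1 ⟨_, hi⟩ ⟨_, hj⟩⟩ :=
        Fin.ext hval.symm
      rw [hxeq]
      exact this
    · have hr : (x : ℕ) - m * k < n - m * k := by have := x.isLt; omega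
      have := congrFun h2 ⟨(x : ℕ) - m * k, hr⟩
      simp only [f] at this
      have hxeq : x = ⟨m * k + ((x : ℕ) - m * k), hpos2 ⟨_, hr⟩⟩ := Fin.ext (show (x : ℕ) = m * k + ((x : ℕ) - m * k) by omega)
      rw [hxeq]
      exact this
  have hcard := Nat.card_le_card_of_injective f finj
  have hsub : Fintype.card {g : Fin k → Bool // ¬ g = fun _ => true} = 2 ^ k - 1 := by
    rw [Fintype.card_subtype_compl]
    simp [Fintype.card_fun]
  calc Nat.card {u : Fin n → Bool | longestRun (List.ofFn u) < k}
      ≤ Nat.card ((Fin m → {g : Fin k → Bool // ¬ g = fun _ => true})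
        × (Fin (n - m * k) → Bool)) := hcard
    _ = (2 ^ k - 1) ^ m * 2 ^ (n - m * k) := by
        rw [Nat.card_eq_fintype_card, Fintype.card_prod, Fintype.card_fun, Fintype.card_fun,
          hsub, Fintype.card_bool, Fintype.card_fin, Fintype.card_fin]

lemma main_bound (n : ℕ) (hn : 4 ≤ n) :
    (Nat.card {u : Fin n → Bool |
        longestRun (List.ofFn u) < ⌊Real.logb 2 n / 2⌋₊} : ℝ) / 2 ^ n
      ≤ 2 * Real.log n / Real.sqrt n := by
  have hn0 : (0:ℝ) < n := by positivity
  have hn1 : (1:ℝ) < n := by exact_mod_cast (by omega : 1 < n)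
  have hlogn : 0 < Real.log n := Real.log_pos hn1
  have hlog2 : 0 < Real.log 2 := Real.log_pos one_lt_two
  have hsq : 0 < Real.sqrt n := Real.sqrt_pos.mpr hn0
  set k := ⌊Real.logb 2 n / 2⌋₊ with hkdef
  have h4 : (2:ℝ) ^ (2:ℝ) = 4 := by
    have h := Real.rpow_natCast (2:ℝ) 2
    simp only [Nat.cast_ofNat] at h
    rw [h]
    norm_num
  have hlogb4 : (2:ℝ) ≤ Real.logb 2 n := by
    rw [Real.le_logb_iff_rpow_le one_lt_two hn0, h4]
    exact_mod_cast hn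
  have hk1 : 1 ≤ k := Nat.le_floor (by push_cast; linarith)
  have hk0 : 0 < k := hk1
  have hkle : (k:ℝ) ≤ Real.logb 2 n / 2 := Nat.floor_le (by linarith)
  have h2k : (2:ℝ) ^ (k:ℕ) ≤ Real.sqrt n := by
    calc (2:ℝ) ^ (k:ℕ) = (2:ℝ) ^ ((k:ℕ):ℝ) := (Real.rpow_natCast 2 k).symm
      _ ≤ (2:ℝ) ^ (Real.logb 2 n / 2) :=
          Real.rpow_le_rpow_of_exponent_le one_le_two hkle
      _ = ((2:ℝ) ^ Real.logb 2 n) ^ ((2:ℝ)⁻¹) := by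
          rw [div_eq_mul_inv, Real.rpow_mul (by norm_num : (0:ℝ) ≤ 2)]
      _ = (n:ℝ) ^ ((2:ℝ)⁻¹) := by
          rw [Real.rpow_logb (by norm_num) (by norm_num) hn0]
      _ = Real.sqrt n := by
          rw [show ((2:ℝ)⁻¹) = 1/2 by norm_num, ← Real.sqrt_eq_rpow]
  set m := n / k with hmdef
  have hmk : m * k ≤ n := Nat.div_mul_le_self n k
  have hnk : n < m * k + k := by
    have h1 := Nat.div_add_mod' n k
    rw [← hmdef] at h1
    have h2 := Nat.mod_lt n hk0
    omega
  set L := Real.logb 2 n with hLdef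
  have hL0 : (0:ℝ) < L := by linarith
  have hLn : L ≤ (n:ℝ) := by
    have hpow : (n:ℝ) < 2 ^ n := by exact_mod_cast (Nat.lt_two_pow_self (n := n))
    have hlt : Real.log n < n * Real.log 2 := by
      calc Real.log n < Real.log ((2:ℝ) ^ n) := Real.log_lt_log hn0 hpow
        _ = n * Real.log 2 := by rw [Real.log_pow]
    rw [hLdef, Real.logb, div_le_iff₀ hlog2]
    linarith
  have hmlb : (n:ℝ) * Real.log 2 / Real.log n ≤ (m:ℝ) := by
    have hnkR : (n:ℝ) < (m:ℝ) * k + k := by exact_mod_cast hnk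
    have hm0 : (0:ℝ) ≤ m := Nat.cast_nonneg m
    have h1 : (n:ℝ) * 2 < ((m:ℝ) + 1) * L := by nlinarith
    have hgoal : (n:ℝ) * Real.log 2 / Real.log n = n / L := by
      rw [hLdef, Real.logb, div_div_eq_mul_div]
    rw [hgoal, div_le_iff₀ hL0]
    nlinarith
  have hm0' : (0:ℝ) < m := lt_of_lt_of_le (by positivity) hmlb
  set p := ((2:ℝ) ^ k)⁻¹ with hpdef
  have hp0 : 0 < p := by positivity
  have h1le : (1:ℝ) ≤ 2 ^ k := by
    have h := pow_le_pow_left₀ (by norm_num : (0:ℝ) ≤ 1) (by norm_num : (1:ℝ) ≤ 2) k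
    simpa using h
  have hp1 : p ≤ 1 := by
    rw [hpdef]
    exact inv_le_one_of_one_le₀ h1le
  have cast2k : ((2 ^ k - 1 : ℕ) : ℝ) = 2 ^ k - 1 := by
    rw [Nat.cast_sub Nat.one_le_two_pow]
    push_cast
    ring
  have step1 : (((2:ℝ) ^ k - 1) ^ m * 2 ^ (n - m * k)) / 2 ^ n = (((2:ℝ)^k - 1)/2^k) ^ m := by
    have h2n : (2:ℝ) ^ n = ((2:ℝ) ^ k) ^ m * 2 ^ (n - m * k) := by
      rw [← pow_mul, ← pow_add]
      congr 1
      rw [Nat.mul_comm]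
      omega
    rw [h2n, mul_div_mul_right _ _ (by positivity : ((2:ℝ) ^ (n - m * k)) ≠ 0), ← div_pow]
  have hfrac : ((2:ℝ) ^ k - 1) / 2 ^ k = 1 - p := by
    rw [hpdef, sub_div, div_self (by positivity : ((2:ℝ)^k) ≠ 0), one_div]
  have step2 : (1 - p) ^ m ≤ Real.exp (-((m:ℝ) * p)) := by
    calc (1 - p) ^ m ≤ Real.exp (-p) ^ m := by
          apply pow_le_pow_left₀ (by linarith)
          linarith [Real.add_one_le_exp (-p)]
      _ = Real.exp (-((m:ℝ) * p)) := by
          rw [← Real.exp_nat_mul]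
          congr 1
          ring
  have hmp : 0 < (m:ℝ) * p := by positivity
  have step3 : Real.exp (-((m:ℝ) * p)) ≤ ((m:ℝ) * p)⁻¹ := by
    have hle : (m:ℝ) * p ≤ Real.exp ((m:ℝ) * p) := by
      linarith [Real.add_one_le_exp ((m:ℝ) * p)]
    rw [Real.exp_neg]
    exact inv_anti₀ hmp hle
  have hns : Real.sqrt n * Real.sqrt n = n := Real.mul_self_sqrt hn0.le
  have step4 : ((m:ℝ) * p)⁻¹ ≤ 2 * Real.log n / Real.sqrt n := by
    have hpge : (Real.sqrt n)⁻¹ ≤ p := by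
      rw [hpdef]
      exact inv_anti₀ (by positivity) h2k
    have hxle : Real.sqrt n * Real.log 2 / Real.log n ≤ (m:ℝ) * p := by
      have hmul := mul_le_mul hmlb hpge (by positivity) (le_of_lt hm0')
      have heq : (n:ℝ) * Real.log 2 / Real.log n * (Real.sqrt n)⁻¹
          = Real.sqrt n * Real.log 2 / Real.log n := by
        field_simp
        linear_combination (-1:ℝ) * hns
      linarith [hmul, heq.ge, heq.le]
    have hx0 : 0 < Real.sqrt n * Real.log 2 / Real.log n := by positivity
    calc ((m:ℝ) * p)⁻¹ ≤ (Real.sqrt n * Real.log 2 / Real.log n)⁻¹ :=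
          inv_anti₀ hx0 hxle
      _ = Real.log n / (Real.sqrt n * Real.log 2) := by rw [inv_div]
      _ ≤ 2 * Real.log n / Real.sqrt n := by
          rw [div_le_div_iff₀ (by positivity) hsq]
          have hl2 : (0.6931471803:ℝ) < Real.log 2 := Real.log_two_gt_d9
          nlinarith [mul_pos hlogn hsq]
  have hcR : (Nat.card {u : Fin n → Bool | longestRun (List.ofFn u) < k} : ℝ)
      ≤ (((2 ^ k - 1) ^ m * 2 ^ (n - m * k) : ℕ) : ℝ) := by
    exact_mod_cast count_bound n k hk0
  calc (Nat.card {u : Fin n → Bool | longestRun (List.ofFn u) < k} : ℝ) / 2 ^ n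
      ≤ (((2 ^ k - 1) ^ m * 2 ^ (n - m * k) : ℕ) : ℝ) / 2 ^ n := by
        gcongr
    _ = (((2:ℝ) ^ k - 1) ^ m * 2 ^ (n - m * k)) / 2 ^ n := by
        congr 1
        push_cast [cast2k]
        ring
    _ = (((2:ℝ) ^ k - 1) / 2 ^ k) ^ m := step1
    _ = (1 - p) ^ m := by rw [hfrac]
    _ ≤ Real.exp (-((m:ℝ) * p)) := step2
    _ ≤ ((m:ℝ) * p)⁻¹ := step3
    _ ≤ 2 * Real.log n / Real.sqrt n := step4


lemma smallCaseEmptyAux (n : ℕ) (hn1 : 1 ≤ n) (hn : n < 4) :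
    Nat.card {u : Fin n → Bool | longestRun (List.ofFn u) < ⌊Real.logb 2 n / 2⌋₊} = 0 := by
  have hn0 : (0:ℝ) < n := by exact_mod_cast hn1
  have h4 : (2:ℝ) ^ (2:ℝ) = 4 := by
    have h := Real.rpow_natCast (2:ℝ) 2
    simp only [Nat.cast_ofNat] at h
    rw [h]
    norm_num
  have hfl : ⌊Real.logb 2 n / 2⌋₊ = 0 := by
    rw [Nat.floor_eq_zero]
    have hlt : Real.logb 2 n < 2 := by
      rw [Real.logb_lt_iff_lt_rpow one_lt_two hn0, h4]
      exact_mod_cast hn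
    linarith
  rw [hfl]
  have hempty : {u : Fin n → Bool | longestRun (List.ofFn u) < 0} = ∅ := by
    ext u; simp
  rw [hempty]
  simp

theorem stmt11 :
    ∃ C > (0 : ℝ),
      (∀ n : ℕ, 1 ≤ n →
        (Nat.card {u : Fin n → Bool |
            longestRun (List.ofFn u) < ⌊Real.logb 2 n / 2⌋₊} : ℝ) / 2 ^ n
          ≤ Real.exp (-Real.sqrt n / 2) + C * Real.log n / Real.sqrt n) ∧
      Filter.Tendsto (fun n : ℕ =>
        (Nat.card {u : Fin n → Bool |
            longestRun (List.ofFn u) < ⌊Real.logb 2 n / 2⌋₊} : ℝ) / 2 ^ n)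
        Filter.atTop (nhds 0) := by
  have hbound : ∀ n : ℕ, 1 ≤ n →
      (Nat.card {u : Fin n → Bool |
          longestRun (List.ofFn u) < ⌊Real.logb 2 n / 2⌋₊} : ℝ) / 2 ^ n
        ≤ Real.exp (-Real.sqrt n / 2) + 2 * Real.log n / Real.sqrt n := by
    intro n hn
    by_cases h4 : 4 ≤ n
    · have h := main_bound n h4
      have hexp : 0 < Real.exp (-Real.sqrt n / 2) := Real.exp_pos _
      linarith
    · have h0 := smallCaseEmptyAux n hn (by omega)
      rw [h0]
      have hlog : 0 ≤ Real.log n := Real.log_nonneg (by exact_mod_cast hn)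
      have hsq : 0 ≤ Real.sqrt n := Real.sqrt_nonneg _
      have h2 : 0 ≤ 2 * Real.log n / Real.sqrt n := by positivity
      have hexp : 0 < Real.exp (-Real.sqrt n / 2) := Real.exp_pos _
      simp only [Nat.cast_zero, zero_div]
      linarith
  refine ⟨2, by norm_num, fun n hn => hbound n hn, ?_⟩
  have hs : Filter.Tendsto Real.sqrt Filter.atTop Filter.atTop := by
    have h := tendsto_rpow_atTop (by norm_num : (0:ℝ) < 1/2)
    exact h.congr fun x => (Real.sqrt_eq_rpow x).symm
  have hsn : Filter.Tendsto (fun n : ℕ => Real.sqrt n) Filter.atTop Filter.atTop :=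
    hs.comp tendsto_natCast_atTop_atTop
  have t1 : Filter.Tendsto (fun n : ℕ => Real.exp (-Real.sqrt n / 2))
      Filter.atTop (nhds 0) := by
    have hneg : Filter.Tendsto (fun n : ℕ => -Real.sqrt n / 2) Filter.atTop Filter.atBot :=
      (tendsto_neg_atTop_atBot.comp hsn).atBot_div_const (by norm_num)
    exact Real.tendsto_exp_atBot.comp hneg
  have t2 : Filter.Tendsto (fun n : ℕ => 2 * Real.log n / Real.sqrt n)
      Filter.atTop (nhds 0) := by
    have hlo := isLittleO_log_rpow_atTop (by norm_num : (0:ℝ) < 1/2)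
    have hdiv := hlo.tendsto_div_nhds_zero
    have hcomp := hdiv.comp (tendsto_natCast_atTop_atTop (R := ℝ))
    have hmul := hcomp.const_mul (2:ℝ)
    rw [mul_zero] at hmul
    refine hmul.congr fun n => ?_
    simp only [Function.comp_apply]
    rw [← Real.sqrt_eq_rpow, mul_div_assoc]
  have tsum : Filter.Tendsto
      (fun n : ℕ => Real.exp (-Real.sqrt n / 2) + 2 * Real.log n / Real.sqrt n)
      Filter.atTop (nhds 0) := by
    have := t1.add t2
    rwa [add_zero] at this
  refine tendsto_of_tendsto_of_tendsto_of_le_of_le' tendsto_const_nhds tsum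
    (Filter.Eventually.of_forall fun n => by positivity)
    (Filter.eventually_atTop.mpr ⟨1, fun n hn => hbound n hn⟩)
end

section
/- The number of distinct accessible deterministic complete automata with n states over a one-letter alphabet is exactly n · 2^n. -/
/-- An accessible deterministic complete automaton over a one-letter alphabet:
a transition function on `n` states, a set of final states, with every state
reachable from the initial state `0`. -/
structure UnaryAut (n : ℕ) [NeZero n] where
  delta : Fin n → Fin n
  final : Finset (Fin n)
  accessible : ∀ q : Fin n, ∃ k : ℕ, delta^[k] 0 = q

/-- Isomorphism of unary automata: a bijection of states fixing the initial state and
preserving transitions and final states. -/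
def unaryIso {n : ℕ} [NeZero n] (X Y : UnaryAut n) : Prop :=
  ∃ π : Equiv.Perm (Fin n), π 0 = 0 ∧ (∀ q, π (X.delta q) = Y.delta (π q)) ∧
    (∀ q, q ∈ X.final ↔ π q ∈ Y.final)

section Aux
variable {n : ℕ} [NeZero n]

lemma unaryIso_equiv : Equivalence (unaryIso (n := n)) := by
  constructor
  · intro X; exact ⟨Equiv.refl _, rfl, fun q => rfl, fun q => Iff.rfl⟩
  · rintro X Y ⟨π, h0, hd, hf⟩
    refine ⟨π.symm, (Equiv.symm_apply_eq π).mpr h0.symm, fun q => ?_, fun q => ?_⟩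
    · have := hd (π.symm q)
      rw [Equiv.apply_symm_apply] at this
      rw [← this, Equiv.symm_apply_apply]
    · have := hf (π.symm q)
      rw [Equiv.apply_symm_apply] at this
      exact this.symm
  · rintro X Y Z ⟨π, h0, hd, hf⟩ ⟨σ, g0, gd, gf⟩
    refine ⟨π.trans σ, by simp [h0, g0], fun q => ?_, fun q => ?_⟩
    · simp only [Equiv.trans_apply, hd, gd]
    · simp only [Equiv.trans_apply]
      exact (hf q).trans (gf (π q))

/-- the canonical automaton with loop target `m` and final set `F` -/
def Canon (m : Fin n) (F : Finset (Fin n)) : UnaryAut n where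
  delta q := if h : q.val + 1 < n then ⟨q.val + 1, h⟩ else m
  final := F
  accessible := by
    have key : ∀ k (hk : k < n),
        (fun q : Fin n => if h : q.val + 1 < n then (⟨q.val + 1, h⟩ : Fin n) else m)^[k] 0
          = ⟨k, hk⟩ := by
      intro k
      induction k with
      | zero => intro hk; rfl
      | succ k ih =>
        intro hk
        rw [Function.iterate_succ_apply', ih (Nat.lt_of_succ_lt hk)]
        simp only [dif_pos hk]
    intro q
    exact ⟨q.val, by rw [key q.val q.isLt]⟩

lemma canon_delta_last (m : Fin n) (F : Finset (Fin n)) (q : Fin n) (h : ¬ q.val + 1 < n) :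
    (Canon m F).delta q = m := by
  simp [Canon, dif_neg h]

lemma canon_delta_lt (m : Fin n) (F : Finset (Fin n)) (q : Fin n) (h : q.val + 1 < n) :
    (Canon m F).delta q = ⟨q.val + 1, h⟩ := by
  simp [Canon, dif_pos h]

/-- injectivity of the orbit map -/
lemma orbit_inj (X : UnaryAut n) : Function.Injective (fun q : Fin n => X.delta^[q.val] 0) := by
  have main : ∀ i j : Fin n, i.val < j.val → X.delta^[i.val] 0 = X.delta^[j.val] 0 → False := by
    intro i j hij heq
    -- every orbit point is among the first j iterates
    have red : ∀ k, X.delta^[k] 0 ∈ (Finset.range j.val).image (fun t => X.delta^[t] 0) := by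
      intro k
      induction k using Nat.strong_induction_on with
      | _ k ih =>
        by_cases hk : k < j.val
        · exact Finset.mem_image.mpr ⟨k, Finset.mem_range.mpr hk, rfl⟩
        · push_neg at hk
          have h1 : X.delta^[k] 0 = X.delta^[k - j.val + i.val] 0 := by
            conv_lhs => rw [show k = k - j.val + j.val from (Nat.sub_add_cancel hk).symm]
            rw [Function.iterate_add_apply, Function.iterate_add_apply, heq]
          rw [h1]
          exact ih _ (by omega)
    have hsub : (Finset.univ : Finset (Fin n)) ⊆
        (Finset.range j.val).image (fun t => X.delta^[t] 0) := by
      intro q _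
      obtain ⟨k, hk⟩ := X.accessible q
      rw [← hk]; exact red k
    have := Finset.card_le_card hsub
    have hcard := (Finset.card_image_le (s := Finset.range j.val)
      (f := fun t => X.delta^[t] 0))
    rw [Finset.card_univ, Fintype.card_fin] at this
    rw [Finset.card_range] at hcard
    have := j.isLt
    omega
  intro i j h
  by_contra hne
  rcases lt_or_gt_of_ne (fun e : i.val = j.val => hne (Fin.ext e)) with hl | hl
  · exact main i j hl h
  · exact main j i hl h.symm

noncomputable def orbitPerm (X : UnaryAut n) : Equiv.Perm (Fin n) :=
  Equiv.ofBijective (fun q : Fin n => X.delta^[q.val] 0)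
    ((Finite.injective_iff_bijective).mp (orbit_inj X))

lemma orbitPerm_apply (X : UnaryAut n) (q : Fin n) : orbitPerm X q = X.delta^[q.val] 0 := rfl

noncomputable def code (X : UnaryAut n) : Fin n × Finset (Fin n) :=
  ((orbitPerm X).symm (X.delta^[n] 0), X.final.map (orbitPerm X).symm.toEmbedding)

lemma code_iso (X : UnaryAut n) : unaryIso (Canon (code X).1 (code X).2) X := by
  refine ⟨orbitPerm X, ?_, fun q => ?_, fun q => ?_⟩
  · rw [orbitPerm_apply]; rfl
  · have key : orbitPerm X ((Canon (code X).1 (code X).2).delta q) = X.delta^[q.val + 1] 0 := by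
      by_cases h : q.val + 1 < n
      · rw [canon_delta_lt _ _ _ h, orbitPerm_apply]
      · rw [canon_delta_last _ _ _ h]
        have hq : q.val + 1 = n := by omega
        show orbitPerm X ((orbitPerm X).symm (X.delta^[n] 0)) = _
        rw [Equiv.apply_symm_apply, hq]
    rw [key, Function.iterate_succ_apply', orbitPerm_apply]
  · show q ∈ X.final.map (orbitPerm X).symm.toEmbedding ↔ _
    rw [Finset.mem_map]
    constructor
    · rintro ⟨r, hr, rfl⟩
      simpa using hr
    · intro h
      exact ⟨orbitPerm X q, h, by simp⟩

lemma canon_inj {m m' : Fin n} {F F' : Finset (Fin n)}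
    (h : unaryIso (Canon m F) (Canon m' F')) : m = m' ∧ F = F' := by
  obtain ⟨π, h0, hd, hf⟩ := h
  have hid : ∀ q : Fin n, π q = q := by
    intro q
    obtain ⟨k, hk⟩ := q
    induction k with
    | zero =>
      have : (⟨0, hk⟩ : Fin n) = 0 := rfl
      rw [this, h0]
    | succ k ih =>
      have hk' : k < n := Nat.lt_of_succ_lt hk
      have e1 : (Canon m F).delta ⟨k, hk'⟩ = ⟨k + 1, hk⟩ := canon_delta_lt _ _ _ hk
      have e2 : (Canon m' F').delta ⟨k, hk'⟩ = ⟨k + 1, hk⟩ := canon_delta_lt _ _ _ hk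
      have := hd ⟨k, hk'⟩
      rw [e1, ih hk', e2] at this
      exact this
  constructor
  · have := hd ⟨n - 1, by omega⟩
    have hlast : ¬ (n - 1) + 1 < n := by omega
    rw [canon_delta_last _ _ _ hlast, hid, hid, canon_delta_last _ _ _ hlast] at this
    exact this
  · ext q
    have := hf q
    rw [hid] at this
    exact this

end Aux

theorem stmt12 (n : ℕ) [NeZero n] :
    Nat.card (Quot (unaryIso (n := n))) = n * 2 ^ n := by
  set f : Fin n × Finset (Fin n) → Quot (unaryIso (n := n)) :=
    fun p => Quot.mk _ (Canon p.1 p.2) with hf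
  have hbij : Function.Bijective f := by
    constructor
    · intro p p' h
      have hg : Relation.EqvGen (unaryIso (n := n)) (Canon p.1 p.2) (Canon p'.1 p'.2) :=
        Quot.eqvGen_exact h
      have hiso : unaryIso (Canon p.1 p.2) (Canon p'.1 p'.2) :=
        (Equivalence.eqvGen_iff unaryIso_equiv).mp hg
      obtain ⟨h1, h2⟩ := canon_inj hiso
      exact Prod.ext h1 h2
    · intro x
      induction x using Quot.ind with
      | _ X =>
        exact ⟨code X, Quot.sound (code_iso X)⟩
  have := Nat.card_eq_of_bijective f hbij
  rw [← this, Nat.card_prod, Nat.card_eq_fintype_card, Nat.card_eq_fintype_card,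
    Fintype.card_fin, Fintype.card_finset, Fintype.card_fin]
end

section
/- Let (u,m) denote the unary automaton with n states where state i·a = i+1 for i < n, n·a = m, and state i is final iff the i-th letter of the binary word u of length n is 1. If the longest run of 1's in u has length at least ℓ ≥ 2, and p is the starting index of such a run with p + ℓ − 1 ≤ n − 1, then states p and p+1 are (ℓ−2)-equivalent in (u,m). Consequently, if (u,m) is minimal (all pairs of distinct states are separated by Myhill-Nerode equivalence), Moore's algorithm requires at least ℓ−1 iterations on (u,m). -/
def nerode {Q A : Type*} (δ : Q → A → Q) (F : Set Q) (p q : Q) : Prop :=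
  ∀ u : List A, (run δ p u ∈ F ↔ run δ q u ∈ F)

noncomputable def mooreCount {Q A : Type*} (δ : Q → A → Q) (F : Set Q) : ℕ :=
  1 + sInf {m : ℕ | ∀ p q : Q, iEquiv δ F m p q ↔ iEquiv δ F (m + 1) p q}

/-- The transition function of the unary automaton `(u, m)`: state `i` goes to `i+1`
for `i < n - 1`, and the last state goes to `m`. -/
def ustep (n : ℕ) (m : Fin n) (q : Fin n) : Fin n :=
  if h : (q : ℕ) + 1 < n then ⟨(q : ℕ) + 1, h⟩ else m

section Aux

variable {Q A : Type*} (δ : Q → A → Q) (F : Set Q)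

lemma run_cons (p : Q) (a : A) (w : List A) :
    run δ p (a :: w) = run δ (δ p a) w := rfl

lemma iEquiv_mono {i j : ℕ} (h : i ≤ j) {p q : Q} (he : iEquiv δ F j p q) :
    iEquiv δ F i p q := fun w hw => he w (hw.trans h)

lemma iEquiv_step {i : ℕ} {p q : Q} (h : iEquiv δ F (i + 1) p q) (a : A) :
    iEquiv δ F i (δ p a) (δ q a) := by
  intro w hw
  have := h (a :: w) (by simp; omega)
  simpa [run_cons] using this

lemma S_chain (m : ℕ) (hS : ∀ p q : Q, iEquiv δ F m p q ↔ iEquiv δ F (m + 1) p q) :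
    ∀ k, ∀ p q : Q, iEquiv δ F (m + k) p q ↔ iEquiv δ F (m + k + 1) p q := by
  intro k
  induction k with
  | zero => simpa using hS
  | succ k ih =>
    intro p q
    constructor
    · intro h w hw
      match w with
      | [] => exact h [] (by simp)
      | a :: w' =>
        have h1 : iEquiv δ F (m + k) (δ p a) (δ q a) :=
          iEquiv_step δ F h a
        have h2 : iEquiv δ F (m + k + 1) (δ p a) (δ q a) := (ih _ _).1 h1
        have hw' : w'.length ≤ m + k + 1 := by
          have := hw; simp at this; omega
        simpa [run_cons] using h2 w' hw'
    · exact iEquiv_mono δ F (by omega)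

lemma S_nerode (m : ℕ) (hS : ∀ p q : Q, iEquiv δ F m p q ↔ iEquiv δ F (m + 1) p q)
    {p q : Q} (h : iEquiv δ F m p q) : nerode δ F p q := by
  have hup : ∀ k, iEquiv δ F (m + k) p q := by
    intro k
    induction k with
    | zero => simpa using h
    | succ k ih => exact (S_chain δ F m hS k p q).1 ih
  intro w
  exact hup w.length w (by omega)

lemma S_nonempty [Finite Q] :
    {m : ℕ | ∀ p q : Q, iEquiv δ F m p q ↔ iEquiv δ F (m + 1) p q}.Nonempty := by
  by_contra hemp
  rw [Set.not_nonempty_iff_eq_empty] at hemp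
  set T : ℕ → Set (Q × Q) := fun m => {x | iEquiv δ F m x.1 x.2} with hT
  have hsub : ∀ m, T (m + 1) ⊆ T m := by
    intro m x hx
    exact iEquiv_mono δ F (by omega) hx
  have hstrict : ∀ m, T (m + 1) ⊂ T m := by
    intro m
    refine ⟨hsub m, fun hc => ?_⟩
    have : m ∈ {m : ℕ | ∀ p q : Q, iEquiv δ F m p q ↔ iEquiv δ F (m + 1) p q} := by
      intro p q
      exact ⟨fun h => hc (show (p, q) ∈ T m from h), fun h => iEquiv_mono δ F (by omega) h⟩
    rw [hemp] at this; exact this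
  have hcard : ∀ m, (T (m + 1)).ncard < (T m).ncard := by
    intro m
    exact Set.ncard_lt_ncard (hstrict m) (Set.toFinite _)
  have hle : ∀ k, (T k).ncard + k ≤ (T 0).ncard := by
    intro k
    induction k with
    | zero => simp
    | succ k ih => have := hcard k; omega
  have := hle ((T 0).ncard + 1)
  omega

end Aux

lemma run_ustep (n : ℕ) (m : Fin n) :
    ∀ (w : List Unit) (q : Fin n) (h : (q : ℕ) + w.length < n),
      run (fun q (_ : Unit) => ustep n m q) q w = ⟨(q : ℕ) + w.length, h⟩ := by
  intro w
  induction w with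
  | nil =>
    intro q h
    simp [run]
  | cons a w ih =>
    intro q h
    have h1 : (q : ℕ) + 1 < n := by simp at h; omega
    have hstep : ustep n m q = ⟨(q : ℕ) + 1, h1⟩ := by simp [ustep, h1]
    have h2 : ((⟨(q : ℕ) + 1, h1⟩ : Fin n) : ℕ) + w.length < n := by
      simp at h ⊢; omega
    rw [run_cons, hstep, ih ⟨(q : ℕ) + 1, h1⟩ h2]
    apply Fin.ext
    simp; omega

theorem stmt13 (n ℓ : ℕ) (hl : 2 ≤ ℓ) (m : Fin n) (u : Fin n → Bool)
    (p : Fin n)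
    (hrun : ∀ i : Fin n, (p : ℕ) ≤ (i : ℕ) → (i : ℕ) < (p : ℕ) + ℓ → u i = true)
    (hfit : (p : ℕ) + ℓ ≤ n - 1) :
    iEquiv (fun q (_ : Unit) => ustep n m q) {i : Fin n | u i = true} (ℓ - 2)
      p ⟨(p : ℕ) + 1, by omega⟩ ∧
    ((∀ s t : Fin n,
        nerode (fun q (_ : Unit) => ustep n m q) {i : Fin n | u i = true} s t → s = t) →
      ℓ - 1 ≤ mooreCount (fun q (_ : Unit) => ustep n m q) {i : Fin n | u i = true}) := by
  have hn : (p : ℕ) + ℓ + 1 ≤ n := by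
    have := p.isLt; omega
  have hequiv : iEquiv (fun q (_ : Unit) => ustep n m q) {i : Fin n | u i = true} (ℓ - 2)
      p ⟨(p : ℕ) + 1, by omega⟩ := by
    intro w hw
    have hw1 : (p : ℕ) + w.length < n := by omega
    have hw2 : (((⟨(p : ℕ) + 1, by omega⟩ : Fin n)) : ℕ) + w.length < n := by
      simp; omega
    rw [run_ustep n m w p hw1, run_ustep n m w ⟨(p : ℕ) + 1, by omega⟩ hw2]
    have e1 : u ⟨(p : ℕ) + w.length, hw1⟩ = true := by
      apply hrun <;> simp <;> omega
    have e2 : u ⟨(((⟨(p : ℕ) + 1, by omega⟩ : Fin n)) : ℕ) + w.length, hw2⟩ = true := by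
      apply hrun <;> simp <;> omega
    simp [Set.mem_setOf_eq, e1, e2]
  refine ⟨hequiv, fun hmin => ?_⟩
  set δ : Fin n → Unit → Fin n := fun q (_ : Unit) => ustep n m q with hδ
  set F : Set (Fin n) := {i : Fin n | u i = true} with hF
  set S : Set ℕ := {k : ℕ | ∀ p q : Fin n, iEquiv δ F k p q ↔ iEquiv δ F (k + 1) p q}
    with hS
  have hne : S.Nonempty := S_nonempty δ F
  have hmem : sInf S ∈ S := Nat.sInf_mem hne
  have hge : ℓ - 2 ≤ sInf S := by
    by_contra hlt
    push_neg at hlt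
    have heq : iEquiv δ F (sInf S) p ⟨(p : ℕ) + 1, by omega⟩ :=
      iEquiv_mono δ F (by omega) hequiv
    have hnd : nerode δ F p ⟨(p : ℕ) + 1, by omega⟩ :=
      S_nerode δ F (sInf S) hmem heq
    have := hmin _ _ hnd
    have := congrArg Fin.val this
    simp at this
  show ℓ - 1 ≤ 1 + sInf S
  omega
end

section
/- Fix n ≥ 2 and ℓ with 1 ≤ ℓ < n, a deterministic complete transition structure T on {1,...,n}, states p ≠ q and a word u of length ℓ. For 0 ≤ i ≤ ℓ−1, let G_i be the graph on {1,...,n} with edge set {{p·v, q·v} : v prefix of u, |v| ≤ i}. Suppose that for some F ⊆ {1,...,n}: p ∼_{ℓ−1} q in (T,F), and exactly one of p·u, q·u lies in F. Then for all 0 ≤ i ≤ ℓ−1, any two vertices s, t joined by a path in G_i satisfy s ∼_{ℓ−1−i} t in (T,F). -/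
theorem stmt16 {A : Type*} (n ℓ : ℕ) (hn : 2 ≤ n) (hl : 1 ≤ ℓ) (hln : ℓ < n)
    (δ : Fin n → A → Fin n) (p q : Fin n) (hpq : p ≠ q)
    (u : List A) (hu : u.length = ℓ)
    (F : Set (Fin n)) (hequiv : iEquiv δ F (ℓ - 1) p q)
    (hxor : Xor' (run δ p u ∈ F) (run δ q u ∈ F)) :
    ∀ i : ℕ, i ≤ ℓ - 1 → ∀ s t : Fin n,
      (SimpleGraph.fromRel (fun s t => ∃ v : List A, v <+: u ∧ v.length ≤ i ∧
        run δ p v = s ∧ run δ q v = t)).Reachable s t →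
      iEquiv δ F (ℓ - 1 - i) s t := by
  intro i hi s t hreach
  -- edge case: p·v and q·v are (ℓ-1-i)-equivalent
  have edge : ∀ v : List A, v.length ≤ i →
      iEquiv δ F (ℓ - 1 - i) (run δ p v) (run δ q v) := by
    intro v hv w hw
    have h1 : (v ++ w).length ≤ ℓ - 1 := by
      rw [List.length_append]; omega
    have := hequiv (v ++ w) h1
    simpa [run, List.foldl_append] using this
  -- symmetry and transitivity of iEquiv
  have symm : ∀ a b : Fin n, iEquiv δ F (ℓ - 1 - i) a b →
      iEquiv δ F (ℓ - 1 - i) b a := fun a b h w hw => (h w hw).symm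
  obtain ⟨wk⟩ := hreach
  induction wk with
  | nil => exact fun w hw => Iff.rfl
  | cons h hw' ih =>
    rename_i a b c
    simp only [SimpleGraph.fromRel_adj] at h
    have hab : iEquiv δ F (ℓ - 1 - i) a b := by
      rcases h.2 with ⟨v, _, hv, h1, h2⟩ | ⟨v, _, hv, h1, h2⟩
      · rw [← h1, ← h2]; exact edge v hv
      · rw [← h1, ← h2]; exact symm _ _ (edge v hv)
    exact fun w hw => (hab w hw).trans (ih w hw)
end

section
/- Let a_n be the average over all n·2^n unary automata (u,m) (u ∈ {0,1}^n the characteristic word of the final states, m = n·a) of the number of iterations Moore(u,m) of Moore's algorithm. Assume: (i) the proportion of minimal unary automata among all unary automata with n states tends to 1/2; (ii) the number of words u ∈ {0,1}^n whose longest run of 1's is less than ℓ_n := ⌊(1/2)log₂ n⌋ is at most 2^n·e^{−√n/2}; (iii) for every minimal automaton (u,m) whose word u has a run of 1's of length at least ℓ_n, Moore(u,m) ≥ ℓ_n − 1. Then a_n ≥ (1/2)ℓ_n − o(ℓ_n), and hence a_n = Θ(log n) (using also the upper bound a_n = O(log n)). -/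
open Filter Asymptotics

/-- Number of iterations of Moore's algorithm on the unary automaton `(u, m)`. -/
noncomputable def umoore (n : ℕ) (u : Fin n → Bool) (m : Fin n) : ℕ :=
  mooreCount (fun q (_ : Unit) => ustep n m q) {i : Fin n | u i = true}

/-- The unary automaton `(u, m)` is minimal. -/
def uminimal (n : ℕ) (u : Fin n → Bool) (m : Fin n) : Prop :=
  ∀ s t : Fin n,
    nerode (fun q (_ : Unit) => ustep n m q) {i : Fin n | u i = true} s t → s = t

noncomputable def runThresh (n : ℕ) : ℕ := ⌊Real.logb 2 n / 2⌋₊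

/-- Average number of iterations of Moore's algorithm over all `n·2^n` unary automata. -/
noncomputable def avgMoore (n : ℕ) : ℝ :=
  (∑ u : Fin n → Bool, ∑ m : Fin n, (umoore n u m : ℝ)) / ((n : ℝ) * 2 ^ n)

set_option synthInstance.maxHeartbeats 1000000

open Classical in
lemma natCard_setOf_eq {α : Type*} [Fintype α] (p : α → Prop) :
    Nat.card {x : α | p x} = (Finset.univ.filter p).card := by
  simp [Nat.card_eq_fintype_card, Fintype.card_subtype]

open Classical in
lemma key_ineq (n : ℕ) (hn : 1 ≤ n)
    (h3 : ∀ (u : Fin n → Bool) (m : Fin n), uminimal n u m →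
      runThresh n ≤ longestRun (List.ofFn u) → runThresh n - 1 ≤ umoore n u m) :
    ((runThresh n - 1 : ℕ) : ℝ) *
      ((Nat.card {x : (Fin n → Bool) × Fin n | uminimal n x.1 x.2} : ℝ)
        - n * (Nat.card {u : Fin n → Bool | longestRun (List.ofFn u) < runThresh n} : ℝ))
      ≤ (n : ℝ) * 2 ^ n * avgMoore n := by
  have hpos : (0 : ℝ) < (n : ℝ) * 2 ^ n := by positivity
  have havg : (n : ℝ) * 2 ^ n * avgMoore n
      = ∑ x : (Fin n → Bool) × Fin n, (umoore n x.1 x.2 : ℝ) := by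
    rw [avgMoore, mul_div_cancel₀ _ hpos.ne', Fintype.sum_prod_type]
  rw [havg]
  have hc0 : (0:ℝ) ≤ ((runThresh n - 1 : ℕ) : ℝ) := Nat.cast_nonneg _
  set G : Finset ((Fin n → Bool) × Fin n) :=
    Finset.univ.filter (fun x => uminimal n x.1 x.2 ∧ runThresh n ≤ longestRun (List.ofFn x.1))
    with hG
  set M : Finset ((Fin n → Bool) × Fin n) :=
    Finset.univ.filter (fun x => uminimal n x.1 x.2) with hM
  set B : Finset ((Fin n → Bool) × Fin n) :=
    Finset.univ.filter (fun x => longestRun (List.ofFn x.1) < runThresh n) with hB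
  set SU : Finset (Fin n → Bool) :=
    Finset.univ.filter (fun u => longestRun (List.ofFn u) < runThresh n) with hSU
  have hMcard : (Nat.card {x : (Fin n → Bool) × Fin n | uminimal n x.1 x.2}) = M.card := by
    rw [natCard_setOf_eq]
  have hSUcard : (Nat.card {u : Fin n → Bool | longestRun (List.ofFn u) < runThresh n}) = SU.card := by
    rw [natCard_setOf_eq, hSU]
    exact congrArg Finset.card (Finset.filter_congr_decidable ..)
  have hBcard : B.card = SU.card * n := by
    have heq : B = SU ×ˢ (Finset.univ : Finset (Fin n)) := by
      ext x
      rw [hB, hSU, Finset.mem_filter, Finset.mem_product, Finset.mem_filter]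
      simp
    rw [heq, Finset.card_product, Finset.card_univ, Fintype.card_fin]
  have hMGB : M ⊆ G ∪ B := by
    intro x hx
    rw [hM, Finset.mem_filter] at hx
    rcases le_or_gt (runThresh n) (longestRun (List.ofFn x.1)) with h | h
    · apply Finset.mem_union_left
      rw [hG, Finset.mem_filter]
      exact ⟨Finset.mem_univ _, hx.2, h⟩
    · apply Finset.mem_union_right
      rw [hB, Finset.mem_filter]
      exact ⟨Finset.mem_univ _, h⟩
  have hcard : (M.card : ℝ) ≤ G.card + n * SU.card := by
    have h := (Finset.card_le_card hMGB).trans (Finset.card_union_le G B)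
    rw [hBcard] at h
    calc (M.card : ℝ) ≤ ((G.card + SU.card * n : ℕ) : ℝ) := by exact_mod_cast h
      _ = G.card + n * SU.card := by push_cast; ring
  have hsum : (G.card : ℝ) * ((runThresh n - 1 : ℕ) : ℝ)
      ≤ ∑ x : (Fin n → Bool) × Fin n, (umoore n x.1 x.2 : ℝ) := by
    calc (G.card : ℝ) * ((runThresh n - 1 : ℕ) : ℝ)
        = ∑ _x ∈ G, ((runThresh n - 1 : ℕ) : ℝ) := by rw [Finset.sum_const, nsmul_eq_mul]
      _ ≤ ∑ x ∈ G, (umoore n x.1 x.2 : ℝ) := by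
          apply Finset.sum_le_sum
          intro x hx
          rw [hG, Finset.mem_filter] at hx
          exact_mod_cast h3 x.1 x.2 hx.2.1 hx.2.2
      _ ≤ ∑ x : (Fin n → Bool) × Fin n, (umoore n x.1 x.2 : ℝ) := by
          apply Finset.sum_le_sum_of_subset_of_nonneg (Finset.subset_univ _)
          intro i _ _; positivity
  calc ((runThresh n - 1 : ℕ) : ℝ) * ((Nat.card {x : (Fin n → Bool) × Fin n | uminimal n x.1 x.2} : ℝ)
        - n * (Nat.card {u : Fin n → Bool | longestRun (List.ofFn u) < runThresh n} : ℝ))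
      ≤ ((runThresh n - 1 : ℕ) : ℝ) * G.card := by
        apply mul_le_mul_of_nonneg_left _ hc0
        rw [hMcard, hSUcard]
        linarith [hcard]
    _ = (G.card : ℝ) * ((runThresh n - 1 : ℕ) : ℝ) := mul_comm _ _
    _ ≤ _ := hsum

lemma runThresh_tendsto : Tendsto (fun n : ℕ => ((runThresh n : ℕ) : ℝ)) atTop atTop := by
  apply tendsto_natCast_atTop_atTop.comp
  apply tendsto_nat_floor_atTop.comp
  apply Tendsto.atTop_div_const (by norm_num)
  exact (Real.tendsto_logb_atTop (by norm_num)).comp tendsto_natCast_atTop_atTop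

lemma sqrt_tendsto' : Tendsto (fun n : ℕ => Real.sqrt n) atTop atTop := by
  refine tendsto_atTop.mpr fun b => ?_
  filter_upwards [eventually_ge_atTop ⌈b^2⌉₊] with n hn
  have h1 : (b^2 : ℝ) ≤ n := le_trans (Nat.le_ceil _) (by exact_mod_cast hn)
  rcases le_or_gt b 0 with hb | hb
  · exact hb.trans (Real.sqrt_nonneg _)
  · nlinarith [Real.sq_sqrt (le_trans (by positivity) h1), Real.sqrt_nonneg (n:ℝ)]

lemma exp_tendsto' : Tendsto (fun n : ℕ => Real.exp (-Real.sqrt n / 2)) atTop (nhds 0) := by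
  apply Real.tendsto_exp_atBot.comp
  apply Tendsto.atBot_div_const (by norm_num)
  exact tendsto_neg_atBot_iff.mpr sqrt_tendsto'

lemma avgMoore_nonneg (n : ℕ) : 0 ≤ avgMoore n := by
  apply div_nonneg _ (by positivity)
  apply Finset.sum_nonneg
  intro u _
  apply Finset.sum_nonneg
  intro m _
  positivity

set_option maxHeartbeats 1000000 in
theorem stmt18
    (hi : Tendsto (fun n : ℕ =>
        (Nat.card {x : (Fin n → Bool) × Fin n | uminimal n x.1 x.2} : ℝ) /
          ((n : ℝ) * 2 ^ n)) atTop (nhds (1 / 2)))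
    (hii : ∀ n : ℕ, 1 ≤ n →
      (Nat.card {u : Fin n → Bool | longestRun (List.ofFn u) < runThresh n} : ℝ)
        ≤ 2 ^ n * Real.exp (-Real.sqrt n / 2))
    (hiii : ∀ (n : ℕ) (u : Fin n → Bool) (m : Fin n), uminimal n u m →
      runThresh n ≤ longestRun (List.ofFn u) → runThresh n - 1 ≤ umoore n u m)
    (hup : ∃ C > (0 : ℝ), ∀ᶠ n : ℕ in atTop, avgMoore n ≤ C * Real.log n) :
    (∃ e : ℕ → ℝ, e =o[atTop] (fun n : ℕ => (runThresh n : ℝ)) ∧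
      ∀ n : ℕ, (1 / 2 : ℝ) * (runThresh n : ℝ) - e n ≤ avgMoore n) ∧
    (∃ c > (0 : ℝ), ∃ C > (0 : ℝ), ∀ᶠ n : ℕ in atTop,
      c * Real.log n ≤ avgMoore n ∧ avgMoore n ≤ C * Real.log n) := by
  classical
  set p : ℕ → ℝ := fun n =>
    (Nat.card {x : (Fin n → Bool) × Fin n | uminimal n x.1 x.2} : ℝ) / ((n : ℝ) * 2 ^ n)
    with hpdef
  set s : ℕ → ℝ := fun n =>
    (Nat.card {u : Fin n → Bool | longestRun (List.ofFn u) < runThresh n} : ℝ) / 2 ^ n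
    with hsdef
  have p_nonneg : ∀ n, 0 ≤ p n := fun n => by positivity
  have s_nonneg : ∀ n, 0 ≤ s n := fun n => by positivity
  -- key inequality in divided form
  have key : ∀ n : ℕ, 1 ≤ n →
      ((runThresh n - 1 : ℕ) : ℝ) * (p n - s n) ≤ avgMoore n := by
    intro n hn
    have hn0 : (n : ℝ) ≠ 0 := Nat.cast_ne_zero.mpr (by omega)
    have hpos : (0 : ℝ) < (n : ℝ) * 2 ^ n := by positivity
    have h := key_ineq n hn (hiii n)
    have heq : p n - s n =
        ((Nat.card {x : (Fin n → Bool) × Fin n | uminimal n x.1 x.2} : ℝ)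
          - n * (Nat.card {u : Fin n → Bool | longestRun (List.ofFn u) < runThresh n} : ℝ))
          / ((n : ℝ) * 2 ^ n) := by
      rw [hpdef, hsdef]
      field_simp
    rw [heq, mul_div_assoc']
    rw [div_le_iff₀ hpos]
    linarith [h]
  -- the error term
  set e : ℕ → ℝ := fun n => max 0 ((1/2 : ℝ) * (runThresh n : ℝ) - avgMoore n) with hedef
  have he_ineq : ∀ n : ℕ, (1 / 2 : ℝ) * (runThresh n : ℝ) - e n ≤ avgMoore n := by
    intro n
    have := le_max_right (0:ℝ) ((1/2 : ℝ) * (runThresh n : ℝ) - avgMoore n)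
    simp only [hedef]
    linarith
  -- s n is eventually small
  have s_small : ∀ n : ℕ, 1 ≤ n → s n ≤ Real.exp (-Real.sqrt n / 2) := by
    intro n hn
    rw [hsdef]
    rw [div_le_iff₀ (by positivity : (0:ℝ) < 2 ^ n)]
    calc _ ≤ 2 ^ n * Real.exp (-Real.sqrt n / 2) := hii n hn
      _ = _ := mul_comm _ _
  have he_o : e =o[atTop] (fun n : ℕ => ((runThresh n : ℕ) : ℝ)) := by
    rw [isLittleO_iff]
    intro c hc
    have E1 : ∀ᶠ n : ℕ in atTop, |p n - 1/2| ≤ min (c/4) (1/4) := by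
      have := Metric.tendsto_nhds.mp hi (min (c/4) (1/4)) (lt_min (by positivity) (by norm_num))
      filter_upwards [this] with n hn
      rw [Real.dist_eq] at hn
      exact hn.le
    have E2 : ∀ᶠ n : ℕ in atTop, s n ≤ c/4 := by
      have h2 : ∀ᶠ n : ℕ in atTop, Real.exp (-Real.sqrt n / 2) < c/4 := by
        apply exp_tendsto'.eventually_lt_const (by positivity)
      filter_upwards [h2, eventually_ge_atTop 1] with n hn hn1
      exact (s_small n hn1).trans hn.le
    have E3 : ∀ᶠ n : ℕ in atTop, max 1 (2/c) ≤ ((runThresh n : ℕ) : ℝ) :=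
      tendsto_atTop.mp runThresh_tendsto _
    filter_upwards [E1, E2, E3, eventually_ge_atTop 1] with n h1 h2 h3 h4
    have hl1 : (1:ℝ) ≤ ((runThresh n : ℕ) : ℝ) := le_trans (le_max_left _ _) h3
    have hl2 : 2/c ≤ ((runThresh n : ℕ) : ℝ) := le_trans (le_max_right _ _) h3
    have hlc : 1 ≤ (c/2) * ((runThresh n : ℕ) : ℝ) := by
      have hml := mul_le_mul_of_nonneg_left hl2 (by positivity : (0:ℝ) ≤ c/2)
      have hone : (c/2) * (2/c) = 1 := by field_simp
      linarith
    have hr1 : 1 ≤ runThresh n := by exact_mod_cast hl1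
    have hcast : ((runThresh n - 1 : ℕ) : ℝ) = ((runThresh n : ℕ) : ℝ) - 1 := by
      rw [Nat.cast_sub hr1]; norm_num
    have hkey := key n h4
    rw [hcast] at hkey
    have habs := abs_le.mp (h1.trans (min_le_left _ _))
    have hp1 : p n ≤ 1 := by
      have := abs_le.mp (h1.trans (min_le_right _ _))
      linarith [this.2]
    set L : ℝ := ((runThresh n : ℕ) : ℝ) with hL
    have hs4 : s n ≤ c/4 := h2
    -- raw bound
    have hraw : (1/2 : ℝ) * L - avgMoore n ≤ c * L := by
      have hA : 0 ≤ L - 1 := by linarith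
      have hB : 0 ≤ (L - 1) * (c/4 - (1/2 - p n)) :=
        mul_nonneg hA (by linarith [habs.2])
      have hC' : 0 ≤ (L - 1) * (c/4 - s n) := mul_nonneg hA (by linarith)
      nlinarith [hkey, hp1, hlc, s_nonneg n, p_nonneg n]
    rw [Real.norm_eq_abs, Real.norm_eq_abs]
    rw [abs_of_nonneg (le_max_left _ _), abs_of_nonneg (by positivity : (0:ℝ) ≤ L)]
    exact max_le (by positivity) hraw
  refine ⟨⟨e, he_o, he_ineq⟩, ?_⟩
  obtain ⟨C, hC0, hC⟩ := hup
  have hL2 : (0:ℝ) < Real.log 2 := Real.log_pos (by norm_num)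
  refine ⟨1/(16 * Real.log 2), by positivity, C, hC0, ?_⟩
  have F1 : ∀ᶠ n : ℕ in atTop, e n ≤ (1/4) * ((runThresh n : ℕ) : ℝ) := by
    filter_upwards [he_o.def (by norm_num : (0:ℝ) < 1/4)] with n hn
    calc e n ≤ |e n| := le_abs_self _
      _ ≤ (1/4) * |((runThresh n : ℕ) : ℝ)| := hn
      _ = (1/4) * ((runThresh n : ℕ) : ℝ) := by rw [abs_of_nonneg (Nat.cast_nonneg _)]
  filter_upwards [F1, hC, eventually_ge_atTop 16] with n h1 h2 h3
  refine ⟨?_, h2⟩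
  set L : ℝ := ((runThresh n : ℕ) : ℝ) with hLdef
  have hlog16 : 4 * Real.log 2 ≤ Real.log n := by
    calc 4 * Real.log 2 = Real.log (2^4) := by rw [Real.log_pow]; push_cast; ring
      _ ≤ Real.log n := Real.log_le_log (by norm_num) (by exact_mod_cast h3)
  have hfloor : Real.logb 2 n / 2 - 1 < L := by
    rw [hLdef]
    unfold runThresh
    exact_mod_cast Nat.sub_one_lt_floor (Real.logb 2 n / 2)
  have hlogb : Real.logb 2 n = Real.log n / Real.log 2 := rfl
  have hln : Real.log n ≤ 2 * Real.log 2 * (L + 1) := by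
    rw [hlogb] at hfloor
    have := hfloor.le
    have h2 : Real.log n / Real.log 2 ≤ 2 * (L + 1) := by linarith
    calc Real.log n = (Real.log n / Real.log 2) * Real.log 2 := by field_simp
      _ ≤ 2 * (L + 1) * Real.log 2 := by
          apply mul_le_mul_of_nonneg_right h2 hL2.le
      _ = 2 * Real.log 2 * (L + 1) := by ring
  have hL1 : (1:ℝ) ≤ L := by nlinarith
  have havg : L / 4 ≤ avgMoore n := by
    have := he_ineq n
    rw [← hLdef] at this
    linarith
  have hstep : (1/(16 * Real.log 2)) * Real.log n ≤ (L + 1)/8 := by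
    have hm : (1/(16 * Real.log 2)) * Real.log n
        ≤ (1/(16 * Real.log 2)) * (2 * Real.log 2 * (L + 1)) :=
      mul_le_mul_of_nonneg_left hln (by positivity)
    have he2 : (1/(16 * Real.log 2)) * (2 * Real.log 2 * (L + 1)) = (L + 1)/8 := by
      field_simp
      ring
    linarith
  have : (L + 1)/8 ≤ L/4 := by linarith
  linarith
end
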